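/- arXiv:2209.12671 — 5 statements merged into one kernel-verified Lean document; each statement's English description precedes it below -/
import Mathlib

section
/- For all integers n ≥ 1 and k ≥ 1: (k(k+n-1))^n < ((2k+n)/2)² · ∏_{j=1}^{n-1} (k+j)(k+n-j). Equivalently, 4·(k(k+n-1))^n < (2k+n)² · ∏_{j=1}^{n-1} (k+j)(k+n-j). -/
theorem stmt_6 (n k : ℕ) (hn : 1 ≤ n) (hk : 1 ≤ k) :
    4 * (k * (k + n - 1)) ^ n
      < (2 * k + n) ^ 2 * ∏ j ∈ Finset.Icc 1 (n - 1), (k + j) * (k + n - j) := by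
  obtain ⟨m, rfl⟩ : ∃ m, n = m + 1 := ⟨n - 1, by omega⟩
  have h1 : k + (m + 1) - 1 = k + m := by omega
  have h2 : m + 1 - 1 = m := by omega
  rw [h1, h2]
  have hprod : (k * (k + m)) ^ m ≤ ∏ j ∈ Finset.Icc 1 m, (k + j) * (k + (m + 1) - j) := by
    have : (k * (k + m)) ^ m = ∏ _j ∈ Finset.Icc 1 m, k * (k + m) := by
      rw [Finset.prod_const, Nat.card_Icc, h2]
    rw [this]
    apply Finset.prod_le_prod'
    intro j hj
    simp only [Finset.mem_Icc] at hj
    obtain ⟨d, hd⟩ : ∃ d, k + (m + 1) - j = k + d ∧ j + d = m + 1 := ⟨m + 1 - j, by omega, by omega⟩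
    rw [hd.1]
    have := hd.2
    nlinarith [hj.1, hj.2]
  have h3 : 4 * (k * (k + m)) < (2 * k + (m + 1)) ^ 2 := by nlinarith
  have hpos : 0 < (k * (k + m)) ^ m := by positivity
  calc 4 * (k * (k + m)) ^ (m + 1) = (4 * (k * (k + m))) * (k * (k + m)) ^ m := by ring
    _ < (2 * k + (m + 1)) ^ 2 * (k * (k + m)) ^ m := (Nat.mul_lt_mul_right hpos).mpr h3
    _ ≤ (2 * k + (m + 1)) ^ 2 * ∏ j ∈ Finset.Icc 1 m, (k + j) * (k + (m + 1) - j) :=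
        Nat.mul_le_mul_left _ hprod
end

section
/- For all integers n ≥ 1 and all k with 4k > n² − 4n, k ≥ 1: ((k+1)(k+n))^n > ((2k+n)/2)² · ∏_{j=1}^{n-1} (k+j)(k+n-j). Equivalently, 4·((k+1)(k+n))^n > (2k+n)² · ∏_{j=1}^{n-1} (k+j)(k+n-j). -/
theorem stmt_8 (n k : ℕ) (hn : 1 ≤ n) (hk : 1 ≤ k)
    (hbig : (4 * k : ℤ) > (n : ℤ) ^ 2 - 4 * n) :
    4 * ((k + 1) * (k + n)) ^ n
      > (2 * k + n) ^ 2 * ∏ j ∈ Finset.Icc 1 (n - 1), (k + j) * (k + n - j) := by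
  have hbigN : n ^ 2 < 4 * (k + n) := by
    have : (n : ℤ) ^ 2 < 4 * (k + n) := by linarith
    exact_mod_cast this
  -- each factor is at most (k+1)*(k+n)
  have hfac : ∀ j ∈ Finset.Icc 1 (n - 1), (k + j) * (k + n - j) ≤ (k + 1) * (k + n) := by
    intro j hj
    simp only [Finset.mem_Icc] at hj
    obtain ⟨hj1, hj2⟩ := hj
    have hjn : j < n := by omega
    set d := n - j with hd
    have hdn : j + d = n := by omega
    have hd1 : 1 ≤ d := by omega
    have hrw : k + n - j = k + d := by omega
    rw [hrw]
    have hjd : 4 * (j * d) ≤ n ^ 2 := by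
      have : 4 * (j * d) ≤ (j + d) ^ 2 := by nlinarith [sq_nonneg ((j : ℤ) - d), sq_nonneg (j + d)]
      calc 4 * (j * d) ≤ (j + d) ^ 2 := this
        _ = n ^ 2 := by rw [hdn]
    have hjd2 : j * d ≤ k + n := by omega
    nlinarith [hjd2, hdn]
  have hprod : ∏ j ∈ Finset.Icc 1 (n - 1), (k + j) * (k + n - j)
      ≤ ((k + 1) * (k + n)) ^ (n - 1) := by
    calc ∏ j ∈ Finset.Icc 1 (n - 1), (k + j) * (k + n - j)
        ≤ ∏ j ∈ Finset.Icc 1 (n - 1), (k + 1) * (k + n) := Finset.prod_le_prod (fun _ _ => Nat.zero_le _) hfac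
      _ = ((k + 1) * (k + n)) ^ (n - 1) := by
          rw [Finset.prod_const, Nat.card_Icc]; norm_num
  have hsq : (2 * k + n) ^ 2 < 4 * ((k + 1) * (k + n)) := by nlinarith
  have hpos : 0 < ((k + 1) * (k + n)) ^ (n - 1) := by positivity
  calc (2 * k + n) ^ 2 * ∏ j ∈ Finset.Icc 1 (n - 1), (k + j) * (k + n - j)
      ≤ (2 * k + n) ^ 2 * ((k + 1) * (k + n)) ^ (n - 1) :=
        Nat.mul_le_mul_left _ hprod
    _ < (4 * ((k + 1) * (k + n))) * ((k + 1) * (k + n)) ^ (n - 1) :=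
        Nat.mul_lt_mul_of_lt_of_le hsq le_rfl hpos
    _ = 4 * ((k + 1) * (k + n)) ^ n := by
        rw [mul_assoc, ← pow_succ']
        congr 2
        omega
end

section
/- Fix n ≥ 1. Define N(k) = C(n+k, k) + C(n+k-1, k-1) (the value of the eigenvalue counting function of S^n at the eigenvalue v_k = k(k+n-1), with convention C(n-1, -1) = 0), and define w(x) = (2/n!)·x^{n/2} (the Weyl function of S^n). Then for every k ≥ 1, w(k(k+n-1)) < N(k). -/
open Finset in
lemma asc_prod_aux (k n : ℕ) : k.ascFactorial n = ∏ j ∈ Finset.range n, (k + j) := by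
  induction n with
  | zero => simp
  | succ m ih => rw [Nat.ascFactorial_succ, Finset.prod_range_succ, ih, mul_comm]

lemma sq_ge_aux (k n : ℕ) (hn : 1 ≤ n) :
    (k * (k + n - 1)) ^ n ≤ (k.ascFactorial n) ^ 2 := by
  obtain ⟨m, rfl⟩ : ∃ m, n = m + 1 := ⟨n - 1, by omega⟩
  rw [asc_prod_aux, sq]
  have hrefl : (∏ j ∈ Finset.range (m + 1), (k + j))
      = ∏ j ∈ Finset.range (m + 1), (k + (m - j)) := by
    rw [← Finset.prod_range_reflect (fun j => k + j) (m + 1)]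
    apply Finset.prod_congr rfl
    intro j hj
    simp only [Finset.mem_range] at hj
    omega
  nth_rewrite 1 [hrefl]
  rw [← Finset.prod_mul_distrib]
  have : (k * (k + (m + 1) - 1)) ^ (m + 1)
      = ∏ _j ∈ Finset.range (m + 1), (k * (k + m)) := by
    have hm : k + (m + 1) - 1 = k + m := by omega
    rw [hm, Finset.prod_const, Finset.card_range]
  rw [this]
  apply Finset.prod_le_prod'
  intro j hj
  simp only [Finset.mem_range] at hj
  obtain ⟨t, ht⟩ : ∃ t, m = t + j := ⟨m - j, by omega⟩
  subst ht
  have : t + j - j = t := by omega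
  rw [this]
  nlinarith [Nat.zero_le (t * j)]

lemma rpow_half_le_aux {x P : ℝ} (hx : 0 ≤ x) (hP : 0 ≤ P) (n : ℕ)
    (h : x ^ n ≤ P ^ 2) : x ^ ((n : ℝ) / 2) ≤ P := by
  have h1 : (x ^ ((n : ℝ) / 2)) ^ 2 = x ^ n := by
    rw [← Real.rpow_natCast (x ^ ((n : ℝ) / 2)) 2, ← Real.rpow_mul hx]
    rw [← Real.rpow_natCast x n]
    congr 1
    push_cast
    ring
  have h2 : (x ^ ((n : ℝ) / 2)) ^ 2 ≤ P ^ 2 := by rw [h1]; exact h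
  exact (pow_le_pow_iff_left₀ (Real.rpow_nonneg hx _) hP (by norm_num)).mp h2

theorem stmt_9 (n k : ℕ) (hn : 1 ≤ n) (hk : 1 ≤ k) :
    (2 / (n.factorial : ℝ)) * ((k * (k + n - 1) : ℕ) : ℝ) ^ ((n : ℝ) / 2)
      < (((n + k).choose k + (n + k - 1).choose (k - 1) : ℕ) : ℝ) := by
  set x : ℝ := ((k * (k + n - 1) : ℕ) : ℝ) with hxdef
  set y : ℝ := (((k + 1) * (k + n) : ℕ) : ℝ) with hydef
  have hx0 : 0 ≤ x := by positivity
  have hy0 : 0 ≤ y := by positivity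
  -- product identities
  have hP1 : (n.factorial : ℕ) * (n + k - 1).choose (k - 1) = k.ascFactorial n := by
    have h1 : ((k - 1) + 1).ascFactorial n = n.factorial * ((k - 1) + n).choose n :=
      Nat.ascFactorial_eq_factorial_mul_choose (k - 1) n
    have h2 : (k - 1) + 1 = k := by omega
    have h3 : (k - 1) + n = n + k - 1 := by omega
    rw [h2, h3] at h1
    rw [h1]
    congr 1
    have := Nat.choose_symm (show k - 1 ≤ n + k - 1 by omega)
    have h4 : n + k - 1 - (k - 1) = n := by omega
    rw [h4] at this
    exact this.symm
  have hP2 : (n.factorial : ℕ) * (n + k).choose k = (k + 1).ascFactorial n := by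
    have h1 : (k + 1).ascFactorial n = n.factorial * (k + n).choose n :=
      Nat.ascFactorial_eq_factorial_mul_choose k n
    rw [h1]
    have h4 : (k + n).choose n = (n + k).choose k := by
      have := Nat.choose_symm (show k ≤ n + k by omega)
      have h5 : n + k - k = n := by omega
      rw [h5] at this
      rw [add_comm k n]
      exact this
    rw [h4]
  -- real bounds
  have hb1 : x ^ ((n : ℝ) / 2) ≤ (k.ascFactorial n : ℝ) := by
    apply rpow_half_le_aux hx0 (by positivity)
    have := sq_ge_aux k n hn
    calc x ^ n = (((k * (k + n - 1)) ^ n : ℕ) : ℝ) := by rw [hxdef, Nat.cast_pow]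
      _ ≤ (((k.ascFactorial n) ^ 2 : ℕ) : ℝ) := by exact_mod_cast this
      _ = (k.ascFactorial n : ℝ) ^ 2 := by push_cast; ring
  have hb2' : y ^ ((n : ℝ) / 2) ≤ ((k + 1).ascFactorial n : ℝ) := by
    apply rpow_half_le_aux hy0 (by positivity)
    have := sq_ge_aux (k + 1) n hn
    have heq : (k + 1) * ((k + 1) + n - 1) = (k + 1) * (k + n) := by
      congr 1; omega
    rw [heq] at this
    calc y ^ n = ((((k + 1) * (k + n)) ^ n : ℕ) : ℝ) := by rw [hydef, Nat.cast_pow]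
      _ ≤ ((((k + 1).ascFactorial n) ^ 2 : ℕ) : ℝ) := by exact_mod_cast this
      _ = (((k + 1).ascFactorial n) : ℝ) ^ 2 := by push_cast; ring
  have hxy : x < y := by
    have : k * (k + n - 1) < (k + 1) * (k + n) := by
      obtain ⟨m, rfl⟩ : ∃ m, n = m + 1 := ⟨n - 1, by omega⟩
      have h : k + (m + 1) - 1 = k + m := by omega
      rw [h]
      nlinarith
    rw [hxdef, hydef]
    exact_mod_cast this
  have hb2 : x ^ ((n : ℝ) / 2) < ((k + 1).ascFactorial n : ℝ) := by
    calc x ^ ((n : ℝ) / 2) < y ^ ((n : ℝ) / 2) := by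
          apply Real.rpow_lt_rpow hx0 hxy
          positivity
      _ ≤ _ := hb2'
  -- assemble
  have hfac : (0 : ℝ) < (n.factorial : ℝ) := by exact_mod_cast n.factorial_pos
  rw [div_mul_eq_mul_div, div_lt_iff₀ hfac]
  have hsum : (((n + k).choose k + (n + k - 1).choose (k - 1) : ℕ) : ℝ) * (n.factorial : ℝ)
      = ((k + 1).ascFactorial n : ℝ) + (k.ascFactorial n : ℝ) := by
    have : ((n + k).choose k + (n + k - 1).choose (k - 1)) * n.factorial
        = (k + 1).ascFactorial n + k.ascFactorial n := by
      rw [Nat.add_mul, mul_comm ((n + k).choose k), mul_comm ((n + k - 1).choose (k - 1)),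
        hP1, hP2]
    exact_mod_cast this
  rw [hsum]
  have : 2 * x ^ ((n : ℝ) / 2) = x ^ ((n : ℝ) / 2) + x ^ ((n : ℝ) / 2) := by ring
  rw [this]
  exact add_lt_add_of_lt_of_le hb2 hb1
end

section
/- Fix n ≥ 1. With N(k) = C(n+k, k) + C(n+k-1, k-1) and w(x) = (2/n!)·x^{n/2}, for every integer k with k > n²/4 − n (and k ≥ 1), we have N(k) < w((k+1)(k+n)). -/
private lemma four_mul_le_sq_add' (a b : ℕ) : 4 * (a * b) ≤ (a + b) ^ 2 := by
  rcases Nat.le_total a b with h | h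
  · obtain ⟨d, rfl⟩ := Nat.exists_eq_add_of_le h
    nlinarith
  · obtain ⟨d, rfl⟩ := Nat.exists_eq_add_of_le h
    nlinarith

open Finset in
theorem stmt_10 (n k : ℕ) (hn : 1 ≤ n) (hk : 1 ≤ k)
    (hbig : (4 * k : ℤ) > (n : ℤ) ^ 2 - 4 * n) :
    (((n + k).choose k + (n + k - 1).choose (k - 1) : ℕ) : ℝ)
      < (2 / (n.factorial : ℝ)) * (((k + 1) * (k + n) : ℕ) : ℝ) ^ ((n : ℝ) / 2) := by
  obtain ⟨m, rfl⟩ : ∃ m, n = m + 1 := ⟨n - 1, (Nat.succ_pred_eq_of_pos hn).symm⟩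
  set n := m + 1 with hndef
  set N : ℕ := (n + k).choose k + (n + k - 1).choose (k - 1) with hN
  set M : ℕ := (k + 1) * (k + n) with hM
  set P : ℕ := ∏ i ∈ range m, (k + 1 + i) with hP
  -- key factorizations
  have h1 : n.factorial * (n + k).choose k = (k + n) * P := by
    have hsymm : (n + k).choose k = (n + k).choose n := by
      rw [← Nat.choose_symm (by omega : k ≤ n + k)]
      congr 1; omega
    rw [hsymm, ← Nat.descFactorial_eq_factorial_mul_choose (n + k) n,
      Nat.descFactorial_eq_prod_range]
    have hcg : ∀ j ∈ range n, n + k - j = k + 1 + (n - 1 - j) := by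
      intro j hj
      simp only [mem_range] at hj
      omega
    have hrefl : ∏ j ∈ range n, (k + 1 + (n - 1 - j)) = ∏ j ∈ range n, (k + 1 + j) :=
      Finset.prod_range_reflect (fun i => k + 1 + i) n
    rw [Finset.prod_congr rfl hcg, hrefl, hndef, Finset.prod_range_succ]
    ring
  have h2 : n.factorial * (n + k - 1).choose (k - 1) = k * P := by
    have hsymm : (n + k - 1).choose (k - 1) = (n + k - 1).choose n := by
      rw [← Nat.choose_symm (by omega : n ≤ n + k - 1)]
      congr 1; omega
    rw [hsymm, ← Nat.descFactorial_eq_factorial_mul_choose (n + k - 1) n,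
      Nat.descFactorial_eq_prod_range]
    have hcg : ∀ j ∈ range n, n + k - 1 - j = k + (n - 1 - j) := by
      intro j hj
      simp only [mem_range] at hj
      omega
    have hrefl : ∏ j ∈ range n, (k + (n - 1 - j)) = ∏ j ∈ range n, (k + j) :=
      Finset.prod_range_reflect (fun i => k + i) n
    rw [Finset.prod_congr rfl hcg, hrefl, hndef, Finset.prod_range_succ']
    rw [Nat.mul_comm, hP]
    congr 1
    exact Finset.prod_congr rfl fun x _ => by ring
  have hA : n.factorial * N = (2 * k + n) * P := by
    rw [hN, Nat.mul_add, h1, h2]; ring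
  -- squared product bound
  have hP2 : P * P = ∏ j ∈ range m, ((k + 1 + j) * (k + 1 + (m - 1 - j))) := by
    rw [Finset.prod_mul_distrib, hP]
    congr 1
    exact (Finset.prod_range_reflect (fun i => k + 1 + i) m).symm
  have hkey : (n.factorial * N) ^ 2 * 4 ^ m < 4 ^ n * M ^ n := by
    have hfac : ∀ j ∈ range m, 4 * ((k + 1 + j) * (k + 1 + (m - 1 - j))) ≤ (2 * k + n) ^ 2 := by
      intro j hj
      simp only [mem_range] at hj
      calc 4 * ((k + 1 + j) * (k + 1 + (m - 1 - j)))
          ≤ ((k + 1 + j) + (k + 1 + (m - 1 - j))) ^ 2 := four_mul_le_sq_add' _ _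
        _ = (2 * k + n) ^ 2 := by congr 1; omega
    have hstep : (n.factorial * N) ^ 2 * 4 ^ m ≤ ((2 * k + n) ^ 2) ^ n := by
      have h4P : ∏ j ∈ range m, (4 * ((k + 1 + j) * (k + 1 + (m - 1 - j))))
          = 4 ^ m * ∏ j ∈ range m, ((k + 1 + j) * (k + 1 + (m - 1 - j))) := by
        rw [Finset.prod_mul_distrib, Finset.prod_const, card_range]
      rw [hA, mul_pow, sq P, hP2]
      calc (2 * k + n) ^ 2 * (∏ j ∈ range m, ((k + 1 + j) * (k + 1 + (m - 1 - j)))) * 4 ^ m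
          = (2 * k + n) ^ 2 * ∏ j ∈ range m, (4 * ((k + 1 + j) * (k + 1 + (m - 1 - j)))) := by
            rw [h4P]; ring
        _ ≤ (2 * k + n) ^ 2 * ∏ j ∈ range m, (2 * k + n) ^ 2 := by
            exact Nat.mul_le_mul_left _ (Finset.prod_le_prod' hfac)
        _ = ((2 * k + n) ^ 2) ^ n := by
            rw [Finset.prod_const, card_range, hndef, pow_succ]; ring
    have hlt : (2 * k + n) ^ 2 < 4 * M := by
      have hn2 : (n : ℤ) ^ 2 < 4 * k + 4 * n := by linarith
      have : n ^ 2 < 4 * k + 4 * n := by exact_mod_cast hn2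
      simp only [hM]; nlinarith
    calc (n.factorial * N) ^ 2 * 4 ^ m ≤ ((2 * k + n) ^ 2) ^ n := hstep
      _ < (4 * M) ^ n := Nat.pow_lt_pow_left hlt (by omega)
      _ = 4 ^ n * M ^ n := mul_pow 4 M n
  have hA2 : (n.factorial * N) ^ 2 < 4 * M ^ n := by
    have : (n.factorial * N) ^ 2 * 4 ^ m < (4 * M ^ n) * 4 ^ m := by
      calc (n.factorial * N) ^ 2 * 4 ^ m < 4 ^ n * M ^ n := hkey
        _ = (4 * M ^ n) * 4 ^ m := by rw [hndef, pow_succ]; ring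
    exact Nat.lt_of_mul_lt_mul_right this
  -- pass to reals
  have hMpos : (0:ℝ) < (M : ℝ) := by
    have : 0 < M := by positivity
    exact_mod_cast this
  have hrw : ((M : ℝ)) ^ ((n : ℝ) / 2) = Real.sqrt ((M : ℝ) ^ n) := by
    rw [show ((n : ℝ) / 2) = (n : ℝ) * (1 / 2) by ring,
      Real.rpow_mul hMpos.le, Real.rpow_natCast, Real.sqrt_eq_rpow]
  rw [hrw, div_mul_eq_mul_div, lt_div_iff₀ (by positivity : (0:ℝ) < (n.factorial : ℝ))]
  have hcast : (N : ℝ) * (n.factorial : ℝ) = ((n.factorial * N : ℕ) : ℝ) := by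
    push_cast; ring
  have h2s : 2 * Real.sqrt ((M : ℝ) ^ n) = Real.sqrt (4 * (M : ℝ) ^ n) := by
    rw [show (4:ℝ) = 2 ^ 2 by norm_num, Real.sqrt_mul (by positivity), Real.sqrt_sq (by norm_num)]
  rw [hcast, h2s, Real.lt_sqrt (by positivity)]
  exact_mod_cast hA2
end

section
/- Fix n ≥ 1. Define N: ℝ → ℝ as the counting function of the multiset of eigenvalues {v_j = j(j+n-1) with multiplicity C(n+j,j) − C(n+j−2,j−2)} and w(x) = (2/n!)·x^{n/2}. Then there exist infinitely many x > 0 with N(x) < w(x) and infinitely many x > 0 with N(x) > w(x); in particular, for every sufficiently large k there exists x ∈ (v_k, v_{k+1}) with N(x) = w(x) at a crossing (i.e., N − w changes sign on (v_k, v_{k+1})). -/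
/-- Multiplicity of the j-th distinct eigenvalue of S^n: C(n+j, j) - C(n+j-2, j-2),
    with the convention C(m, i) = 0 for i < 0 (so mult 0 = 1, mult 1 = n+1). -/
def sphereMult (n j : ℕ) : ℕ :=
  (n + j).choose j - (if 2 ≤ j then (n + j - 2).choose (j - 2) else 0)

/-- The eigenvalue counting function of S^n:
    N(x) = ∑_{j : j(j+n-1) ≤ x} mult(j). -/
noncomputable def sphereN (n : ℕ) (x : ℝ) : ℝ :=
  ∑ j ∈ Finset.range (⌊x⌋₊ + 1),
    if ((j * (j + n - 1) : ℕ) : ℝ) ≤ x then (sphereMult n j : ℝ) else 0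

/-- The Weyl function of S^n: w(x) = (2/n!) x^{n/2}. -/
noncomputable def sphereW (n : ℕ) (x : ℝ) : ℝ :=
  (2 / (n.factorial : ℝ)) * x ^ ((n : ℝ) / 2)

namespace Stmt11


/-- partial eigenvalue count at level k -/
def Sk (n k : ℕ) : ℕ := (n + k).choose n + (n + k - 1).choose n

lemma choose_symm' (n j : ℕ) : (n + j).choose j = (n + j).choose n := by
  rw [← Nat.choose_symm (Nat.le_add_right n j)]
  congr 1
  omega

lemma sum_mult (n : ℕ) (hn : 1 ≤ n) :
    ∀ k, 1 ≤ k → (∑ j ∈ Finset.range (k + 1), sphereMult n j) = Sk n k := by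
  intro k hk
  induction k with
  | zero => omega
  | succ m ih =>
    rcases Nat.eq_or_lt_of_le hk with h1 | h1
    · -- m = 0, k = 1
      have hm : m = 0 := by omega
      subst hm
      simp [sphereMult, Sk, Finset.sum_range_succ, choose_symm']
      omega
    · have hm : 1 ≤ m := by omega
      rw [Finset.sum_range_succ, ih hm]
      have h2 : 2 ≤ m + 1 := by omega
      have hmult : sphereMult n (m+1) = (n + (m+1)).choose n - (n + (m-1)).choose n := by
        unfold sphereMult
        rw [if_pos h2]
        have h3 : n + (m+1) - 2 = n + (m-1) := by omega
        have h4 : m + 1 - 2 = m - 1 := by omega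
        rw [h3, h4, choose_symm' n (m+1), choose_symm' n (m-1)]
      have hle : (n + (m-1)).choose n ≤ (n + (m+1)).choose n :=
        Nat.choose_le_choose n (by omega)
      have eSkm : Sk n m = (n + m).choose n + (n + (m-1)).choose n := by
        unfold Sk
        rw [show n + m - 1 = n + (m-1) from by omega]
      have eSkm1 : Sk n (m+1) = (n + (m+1)).choose n + (n + m).choose n := by
        unfold Sk
        rw [show n + (m+1) - 1 = n + m from by omega]
      omega

lemma prodQ (n k : ℕ) : (∏ i ∈ Finset.range n, (k + 1 + i)) * k.factorial = (n + k).factorial := by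
  induction n with
  | zero => simp
  | succ m ih =>
    rw [Finset.prod_range_succ]
    have : m + 1 + k = (m + k) + 1 := by omega
    rw [this, Nat.factorial_succ, ← ih]
    ring

lemma fact_choose (n k : ℕ) :
    n.factorial * (n + k).choose n = ∏ i ∈ Finset.range n, (k + 1 + i) := by
  have h := Nat.choose_mul_factorial_mul_factorial (Nat.le_add_right n k)
  have h2 : n + k - n = k := by omega
  rw [h2] at h
  have := prodQ n k
  have hk : 0 < k.factorial := k.factorial_pos
  exact Nat.eq_of_mul_eq_mul_right hk (by rw [this]; linarith [h])

lemma fact_Sk (n k : ℕ) (hn : 1 ≤ n) (hk : 1 ≤ k) :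
    n.factorial * Sk n k = (2 * k + n) * ∏ i ∈ Finset.range (n - 1), (k + 1 + i) := by
  unfold Sk
  rw [Nat.mul_add, fact_choose]
  have e1 : n + k - 1 = n + (k - 1) := by omega
  rw [e1, fact_choose]
  obtain ⟨m, rfl⟩ : ∃ m, n = m + 1 := ⟨n - 1, by omega⟩
  obtain ⟨l, rfl⟩ : ∃ l, k = l + 1 := ⟨k - 1, by omega⟩
  rw [Finset.prod_range_succ, Finset.prod_range_succ']
  simp only [Nat.succ_sub_one, Nat.add_zero]
  have : (∏ x ∈ Finset.range m, (l + 1 + (x + 1))) = ∏ x ∈ Finset.range m, (l + 1 + 1 + x) :=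
    Finset.prod_congr rfl fun x _ => by omega
  rw [this]
  ring




lemma rpow_half (n : ℕ) (x : ℝ) (hx : 0 ≤ x) :
    x ^ ((n : ℝ) / 2) = (Real.sqrt x) ^ n := by
  rw [Real.sqrt_eq_rpow, ← Real.rpow_natCast (x ^ (1/(2:ℝ))) n, ← Real.rpow_mul hx]
  ring_nf

lemma sphereW_sqrt (n : ℕ) (x : ℝ) (hx : 0 ≤ x) :
    sphereW n x = (2 / (n.factorial : ℝ)) * (Real.sqrt x) ^ n := by
  rw [sphereW, rpow_half n x hx]

lemma sphereW_strictMonoOn (n : ℕ) (hn : 1 ≤ n) {x y : ℝ} (hx : 0 ≤ x) (hxy : x < y) :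
    sphereW n x < sphereW n y := by
  rw [sphereW_sqrt n x hx, sphereW_sqrt n y (le_trans hx hxy.le)]
  have h2 : (0:ℝ) < 2 / (n.factorial : ℝ) := by positivity
  apply mul_lt_mul_of_pos_left _ h2
  exact pow_lt_pow_left₀ (Real.sqrt_lt_sqrt hx hxy) (Real.sqrt_nonneg x) (by omega)

lemma sphereW_continuousOn (n : ℕ) {a b : ℝ} (ha : 0 < a) :
    ContinuousOn (sphereW n) (Set.Icc a b) := by
  apply ContinuousOn.mul continuousOn_const
  intro x hx
  have hx0 : x ≠ 0 := by
    have := hx.1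
    intro h
    rw [h] at this
    linarith
  exact (Real.continuousAt_rpow_const x _ (Or.inl hx0)).continuousWithinAt



lemma pair_prod (m : ℕ) (K N : ℝ) (hN : N = m + 1) :
    (∏ i ∈ Finset.range m, (K+1+i)) * (∏ i ∈ Finset.range m, (K+1+i))
      = ∏ i ∈ Finset.range m, ((K+1+i) * (K+N-1-i)) := by
  have hrefl := Finset.prod_range_reflect (fun j : ℕ => K + N - 1 - (j:ℝ)) m
  have hrefl2 : ∏ j ∈ Finset.range m, (K+1+(j:ℝ)) = ∏ j ∈ Finset.range m, (K+N-1-(j:ℝ)) := by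
    rw [← hrefl]
    apply Finset.prod_congr rfl
    intro j hj
    rw [Finset.mem_range] at hj
    have hc : ((m - 1 - j : ℕ) : ℝ) = (m:ℝ) - 1 - j := by
      rw [show m-1-j = m-(1+j) from by omega, Nat.cast_sub (by omega)]
      push_cast
      ring
    simp only [hc, hN]
    push_cast
    ring
  nth_rewrite 2 [hrefl2]
  rw [← Finset.prod_mul_distrib]

lemma realA' (m : ℕ) (K N : ℝ) (hK : 1 ≤ K) (hN : N = m + 1) :
    4 * (K * (K + N - 1)) ^ (m+1)
      < ((2*K+N) * ∏ i ∈ Finset.range m, (K+1+i)) ^ 2 := by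
  have hN1 : 1 ≤ N := by
    rw [hN]
    have : (0:ℝ) ≤ m := Nat.cast_nonneg m
    linarith
  have hV : 1 ≤ K * (K + N - 1) := by nlinarith
  have hsq : ((2*K+N) * ∏ i ∈ Finset.range m, (K+1+i)) ^ 2
      = (2*K+N)^2 * ∏ i ∈ Finset.range m, ((K+1+i) * (K+N-1-i)) := by
    rw [← pair_prod m K N hN]
    ring
  rw [hsq]
  have hconst : (∏ _i ∈ Finset.range m, (K * (K + N - 1))) = (K * (K + N - 1)) ^ m := by
    rw [Finset.prod_const, Finset.card_range]
  have hprod : (K * (K + N - 1)) ^ m ≤ ∏ i ∈ Finset.range m, ((K+1+i) * (K+N-1-i)) := by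
    rw [← hconst]
    apply Finset.prod_le_prod
    · intro i _; nlinarith
    · intro i hi
      rw [Finset.mem_range] at hi
      have hi' : (i:ℝ) ≤ N - 2 := by
        have h1 : (i:ℝ) + 1 ≤ (m:ℝ) := by exact_mod_cast hi
        linarith [hN]
      have hi0 : (0:ℝ) ≤ i := Nat.cast_nonneg i
      nlinarith
  have h2 : 4 * (K * (K + N - 1)) < (2*K+N)^2 := by nlinarith
  calc 4 * (K * (K + N - 1)) ^ (m+1) = (4*(K * (K + N - 1))) * (K * (K + N - 1))^m := by ring
    _ < (2*K+N)^2 * (K * (K + N - 1))^m := by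
        apply mul_lt_mul_of_pos_right h2
        positivity
    _ ≤ (2*K+N)^2 * ∏ i ∈ Finset.range m, ((K+1+i) * (K+N-1-i)) :=
        mul_le_mul_of_nonneg_left hprod (sq_nonneg _)

lemma realB' (m : ℕ) (K N : ℝ) (hN : N = m + 1) (hK : N * N ≤ K) :
    ((2*K+N) * ∏ i ∈ Finset.range m, (K+1+i)) ^ 2
      < 4 * ((K+1) * (K+N)) ^ (m+1) := by
  have hN1 : 1 ≤ N := by
    rw [hN]
    have : (0:ℝ) ≤ m := Nat.cast_nonneg m
    linarith
  have hK1 : 1 ≤ K := by nlinarith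
  have hW : 1 ≤ (K+1) * (K+N) := by nlinarith
  have hsq : ((2*K+N) * ∏ i ∈ Finset.range m, (K+1+i)) ^ 2
      = (2*K+N)^2 * ∏ i ∈ Finset.range m, ((K+1+i) * (K+N-1-i)) := by
    rw [← pair_prod m K N hN]
    ring
  rw [hsq]
  have hconst : (∏ _i ∈ Finset.range m, ((K+1) * (K+N))) = ((K+1) * (K+N)) ^ m := by
    rw [Finset.prod_const, Finset.card_range]
  have hprod : (∏ i ∈ Finset.range m, ((K+1+i) * (K+N-1-i))) ≤ ((K+1) * (K+N)) ^ m := by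
    rw [← hconst]
    apply Finset.prod_le_prod
    · intro i hi
      rw [Finset.mem_range] at hi
      have hi' : (i:ℝ) ≤ N - 2 := by
        have h1 : (i:ℝ) + 1 ≤ (m:ℝ) := by exact_mod_cast hi
        linarith [hN]
      have hi0 : (0:ℝ) ≤ i := Nat.cast_nonneg i
      nlinarith
    · intro i hi
      rw [Finset.mem_range] at hi
      have hi' : (i:ℝ) ≤ N - 2 := by
        have h1 : (i:ℝ) + 1 ≤ (m:ℝ) := by exact_mod_cast hi
        linarith [hN]
      have hi0 : (0:ℝ) ≤ i := Nat.cast_nonneg i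
      nlinarith [sq_nonneg (N - 2 - 2*(i:ℝ))]
  have h2 : (2*K+N)^2 < 4 * ((K+1) * (K+N)) := by nlinarith
  calc (2*K+N)^2 * ∏ i ∈ Finset.range m, ((K+1+i) * (K+N-1-i))
      ≤ (2*K+N)^2 * ((K+1) * (K+N))^m := mul_le_mul_of_nonneg_left hprod (sq_nonneg _)
    _ < (4*((K+1) * (K+N))) * ((K+1) * (K+N))^m := by
        apply mul_lt_mul_of_pos_right h2
        positivity
    _ = 4 * ((K+1) * (K+N))^(m+1) := by ring



lemma N_const (n k : ℕ) (hn : 1 ≤ n) (x : ℝ)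
    (h1 : ((k * (k + n - 1) : ℕ) : ℝ) ≤ x)
    (h2 : x < (((k + 1) * (k + n) : ℕ) : ℝ)) :
    sphereN n x = ((∑ j ∈ Finset.range (k + 1), sphereMult n j : ℕ) : ℝ) := by
  have hkfl : k ≤ ⌊x⌋₊ := by
    apply Nat.le_floor
    refine le_trans ?_ h1
    have : k ≤ k * (k + n - 1) := by
      rcases Nat.eq_zero_or_pos k with hk0 | hk0
      · simp [hk0]
      · have h9 : 1 ≤ k + n - 1 := by omega
        calc k = k * 1 := (Nat.mul_one k).symm
          _ ≤ k * (k + n - 1) := Nat.mul_le_mul (le_refl k) h9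
    exact_mod_cast this
  have hsub : Finset.range (k + 1) ⊆ Finset.range (⌊x⌋₊ + 1) :=
    Finset.range_subset_range.mpr (by omega)
  have hzero : ∀ j ∈ Finset.range (⌊x⌋₊ + 1), j ∉ Finset.range (k + 1) →
      (if ((j * (j + n - 1) : ℕ) : ℝ) ≤ x then (sphereMult n j : ℝ) else 0) = 0 := by
    intro j _ hj
    rw [Finset.mem_range, not_lt] at hj
    rw [if_neg]
    push_neg
    refine lt_of_lt_of_le h2 ?_
    have : (k + 1) * (k + n) ≤ j * (j + n - 1) :=
      Nat.mul_le_mul (by omega) (by omega)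
    exact_mod_cast this
  rw [sphereN, ← Finset.sum_subset hsub hzero]
  rw [Finset.sum_congr rfl (fun j hj => ?_), Nat.cast_sum]
  rw [Finset.mem_range] at hj
  rw [if_pos]
  refine le_trans ?_ h1
  have : j * (j + n - 1) ≤ k * (k + n - 1) :=
    Nat.mul_le_mul (by omega) (by omega)
  exact_mod_cast this



lemma crossing (n k : ℕ) (hn : 1 ≤ n) (hk : n * n + 1 ≤ k) :
    ∃ x₀ x₁ x₂ : ℝ,
      ((k * (k + n - 1) : ℕ) : ℝ) < x₀ ∧ x₀ < (((k + 1) * (k + n) : ℕ) : ℝ)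
        ∧ sphereN n x₀ = sphereW n x₀
      ∧ ((k : ℝ) < x₁ ∧ 0 < x₁ ∧ sphereW n x₁ < sphereN n x₁)
      ∧ ((k : ℝ) < x₂ ∧ 0 < x₂ ∧ sphereN n x₂ < sphereW n x₂) := by
  have hk1 : 1 ≤ k := by nlinarith
  obtain ⟨m, hm⟩ : ∃ m, n = m + 1 := ⟨n - 1, by omega⟩
  set a : ℝ := ((k * (k + n - 1) : ℕ) : ℝ) with ha_def
  set b : ℝ := (((k + 1) * (k + n) : ℕ) : ℝ) with hb_def
  set S : ℝ := ((Sk n k : ℕ) : ℝ) with hS_def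
  have hc : (0:ℝ) < (n.factorial : ℝ) := by exact_mod_cast n.factorial_pos
  have hcS : (n.factorial : ℝ) * S
      = (2*(k:ℝ)+(n:ℝ)) * ∏ i ∈ Finset.range (n-1), ((k:ℝ)+1+i) := by
    have h := congrArg (Nat.cast : ℕ → ℝ) (fact_Sk n k hn hk1)
    push_cast at h
    rw [hS_def]
    push_cast
    linarith [h]
  have ha_eq : a = (k:ℝ) * ((k:ℝ)+(n:ℝ)-1) := by
    rw [ha_def, Nat.cast_mul, Nat.cast_sub (by omega : 1 ≤ k + n)]
    push_cast
    ring
  have hb_eq : b = ((k:ℝ)+1) * ((k:ℝ)+(n:ℝ)) := by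
    rw [hb_def]
    push_cast
    ring
  have hk1r : (1:ℝ) ≤ (k:ℝ) := by exact_mod_cast hk1
  have hnr : (1:ℝ) ≤ (n:ℝ) := by exact_mod_cast hn
  have ha_pos : 0 < a := by rw [ha_eq]; nlinarith
  have hb_pos : 0 < b := by rw [hb_eq]; nlinarith
  have hab : a < b := by rw [ha_eq, hb_eq]; nlinarith
  have hNm : (n:ℝ) = (m:ℝ) + 1 := by exact_mod_cast congrArg (Nat.cast : ℕ → ℝ) hm
  have hrange : n - 1 = m := by omega
  have hSpos : (0:ℝ) < S := by
    rw [hS_def]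
    have : 0 < Sk n k := by
      unfold Sk
      have := Nat.choose_pos (Nat.le_add_right n k)
      omega
    exact_mod_cast this
  -- w(a) < S
  have hwa : sphereW n a < S := by
    have hA := realA' m (k:ℝ) (n:ℝ) hk1r hNm
    rw [hrange] at hcS
    have hsq1 : (2 * (Real.sqrt a) ^ n) ^ 2 = 4 * ((k:ℝ) * ((k:ℝ)+(n:ℝ)-1)) ^ n := by
      have : (Real.sqrt a) ^ 2 = a := Real.sq_sqrt ha_pos.le
      calc (2 * (Real.sqrt a) ^ n) ^ 2 = 4 * ((Real.sqrt a) ^ 2) ^ n := by ring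
        _ = 4 * ((k:ℝ) * ((k:ℝ)+(n:ℝ)-1)) ^ n := by rw [this, ha_eq]
    have hsq2 : ((n.factorial : ℝ) * S) ^ 2
        = ((2*(k:ℝ)+(n:ℝ)) * ∏ i ∈ Finset.range m, ((k:ℝ)+1+i)) ^ 2 := by rw [hcS]
    have hlt : (2 * (Real.sqrt a) ^ n) ^ 2 < ((n.factorial : ℝ) * S) ^ 2 := by
      rw [hsq1, hsq2]
      rw [← hm] at hA
      exact hA
    have hfin : 2 * (Real.sqrt a) ^ n < (n.factorial : ℝ) * S :=
      lt_of_pow_lt_pow_left₀ 2 (by positivity) hlt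
    rw [sphereW_sqrt n a ha_pos.le, div_mul_eq_mul_div, div_lt_iff₀ hc]
    linarith
  -- S < w(b)
  have hwb : S < sphereW n b := by
    have hkn : (n:ℝ) * (n:ℝ) ≤ (k:ℝ) := by
      have : n * n ≤ k := by omega
      exact_mod_cast this
    have hB := realB' m (k:ℝ) (n:ℝ) hNm hkn
    rw [hrange] at hcS
    have hsq1 : (2 * (Real.sqrt b) ^ n) ^ 2 = 4 * (((k:ℝ)+1) * ((k:ℝ)+(n:ℝ))) ^ n := by
      have : (Real.sqrt b) ^ 2 = b := Real.sq_sqrt hb_pos.le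
      calc (2 * (Real.sqrt b) ^ n) ^ 2 = 4 * ((Real.sqrt b) ^ 2) ^ n := by ring
        _ = 4 * (((k:ℝ)+1) * ((k:ℝ)+(n:ℝ))) ^ n := by rw [this, hb_eq]
    have hlt : ((n.factorial : ℝ) * S) ^ 2 < (2 * (Real.sqrt b) ^ n) ^ 2 := by
      rw [hsq1, hcS]
      rw [← hm] at hB
      exact hB
    have hfin : (n.factorial : ℝ) * S < 2 * (Real.sqrt b) ^ n :=
      lt_of_pow_lt_pow_left₀ 2 (by positivity) hlt
    rw [sphereW_sqrt n b hb_pos.le, div_mul_eq_mul_div, lt_div_iff₀ hc]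
    linarith
  -- IVT
  have hcont : ContinuousOn (sphereW n) (Set.Icc a b) := sphereW_continuousOn n ha_pos
  have hivt := intermediate_value_Ioo hab.le hcont
  obtain ⟨x₀, hx₀mem, hx₀⟩ := hivt ⟨hwa, hwb⟩
  have hNconst : ∀ y : ℝ, a ≤ y → y < b → sphereN n y = S := by
    intro y hy1 hy2
    rw [N_const n k hn y hy1 hy2, hS_def, sum_mult n hn k hk1]
  have hka : (k:ℝ) ≤ a := by
    rw [ha_eq]
    nlinarith
  refine ⟨x₀, (a + x₀)/2, (x₀ + b)/2, hx₀mem.1, hx₀mem.2, ?_, ⟨?_, ?_, ?_⟩, ⟨?_, ?_, ?_⟩⟩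
  · rw [hNconst x₀ hx₀mem.1.le hx₀mem.2, hx₀]
  · linarith [hx₀mem.1]
  · linarith [hx₀mem.1]
  · have h1 : a ≤ (a + x₀)/2 := by linarith [hx₀mem.1]
    have h2 : (a + x₀)/2 < b := by linarith [hx₀mem.1, hx₀mem.2]
    rw [hNconst _ h1 h2]
    calc sphereW n ((a + x₀)/2) < sphereW n x₀ :=
          sphereW_strictMonoOn n hn (by linarith [hx₀mem.1]) (by linarith [hx₀mem.1])
      _ = S := hx₀
  · linarith [hx₀mem.1, hx₀mem.2]
  · linarith [hx₀mem.1, hx₀mem.2]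
  · have h1 : a ≤ (x₀ + b)/2 := by linarith [hx₀mem.1, hx₀mem.2]
    have h2 : (x₀ + b)/2 < b := by linarith [hx₀mem.2]
    rw [hNconst _ h1 h2]
    calc S = sphereW n x₀ := hx₀.symm
      _ < sphereW n ((x₀ + b)/2) :=
          sphereW_strictMonoOn n hn (by linarith [ha_pos, hx₀mem.1]) (by linarith [hx₀mem.2])

end Stmt11

theorem stmt_11 (n : ℕ) (hn : 1 ≤ n) :
    {x : ℝ | 0 < x ∧ sphereN n x < sphereW n x}.Infinite
      ∧ {x : ℝ | 0 < x ∧ sphereW n x < sphereN n x}.Infinite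
      ∧ ∃ K : ℕ, ∀ k ≥ K, ∃ x : ℝ,
          ((k * (k + n - 1) : ℕ) : ℝ) < x ∧ x < (((k + 1) * (k + n) : ℕ) : ℝ)
            ∧ sphereN n x = sphereW n x := by
  refine ⟨?_, ?_, ⟨n*n+1, fun k hk => ?_⟩⟩
  · apply Set.infinite_of_not_bddAbove
    rintro ⟨M, hM⟩
    set k := n*n + 1 + ⌈M⌉₊ with hk_def
    obtain ⟨x₀, x₁, x₂, h⟩ := Stmt11.crossing n k hn (by omega)
    have hx₂ := h.2.2.2.2
    have hmem : x₂ ∈ {x : ℝ | 0 < x ∧ sphereN n x < sphereW n x} :=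
      ⟨hx₂.2.1, hx₂.2.2⟩
    have hle := hM hmem
    have h1 : (M:ℝ) ≤ (⌈M⌉₊ : ℝ) := Nat.le_ceil M
    have h2 : ((⌈M⌉₊:ℕ) : ℝ) ≤ (k : ℝ) := by
      have : ⌈M⌉₊ ≤ k := by omega
      exact_mod_cast this
    linarith [hx₂.1]
  · apply Set.infinite_of_not_bddAbove
    rintro ⟨M, hM⟩
    set k := n*n + 1 + ⌈M⌉₊ with hk_def
    obtain ⟨x₀, x₁, x₂, h⟩ := Stmt11.crossing n k hn (by omega)
    have hx₁ := h.2.2.2.1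
    have hmem : x₁ ∈ {x : ℝ | 0 < x ∧ sphereW n x < sphereN n x} :=
      ⟨hx₁.2.1, hx₁.2.2⟩
    have hle := hM hmem
    have h1 : (M:ℝ) ≤ (⌈M⌉₊ : ℝ) := Nat.le_ceil M
    have h2 : ((⌈M⌉₊:ℕ) : ℝ) ≤ (k : ℝ) := by
      have : ⌈M⌉₊ ≤ k := by omega
      exact_mod_cast this
    linarith [hx₁.1]
  · obtain ⟨x₀, x₁, x₂, h⟩ := Stmt11.crossing n k hn (by omega)
    exact ⟨x₀, h.1, h.2.1, h.2.2.1⟩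
end
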